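/- arXiv:1202.6431 — 6 statements merged into one kernel-verified Lean document; each statement's English description precedes it below -/
import Mathlib

section
/- If A is an m-order n-dimensional M-tensor, i.e., A = cI - B where B is an entrywise nonnegative tensor and c > ρ(B) (the spectral radius of B), then every eigenvalue λ of A (a pair (λ,x) with x ≠ 0 satisfying A x^{m-1} = λ x^{[m-1]}) has positive real part. -/
open scoped BigOperators

/-- Action of an `(k+1)`-order `n`-dimensional real tensor on a complex vector:
`(A x^{m-1})_i = ∑_{i2,...,im} A_{i i2...im} x_{i2} ⋯ x_{im}` (here `k = m-1`). -/
noncomputable def tApplyC {n k : ℕ} (A : Fin n → (Fin k → Fin n) → ℝ) (x : Fin n → ℂ) (i : Fin n) : ℂ :=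
  ∑ j : Fin k → Fin n, (A i j : ℂ) * ∏ t, x (j t)

/-- Real version of the tensor action. -/
def tApplyR {n k : ℕ} (A : Fin n → (Fin k → Fin n) → ℝ) (x : Fin n → ℝ) (i : Fin n) : ℝ :=
  ∑ j : Fin k → Fin n, A i j * ∏ t, x (j t)

/-- `(lam, x)` is an eigenvalue-eigenvector pair: `x ≠ 0` and `A x^{m-1} = lam x^{[m-1]}`. -/
def IsEigPair {n k : ℕ} (A : Fin n → (Fin k → Fin n) → ℝ) (lam : ℂ) (x : Fin n → ℂ) : Prop :=
  x ≠ 0 ∧ ∀ i, tApplyC A x i = lam * x i ^ k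

/-- `lam` is an eigenvalue of `A`. -/
def IsEig {n k : ℕ} (A : Fin n → (Fin k → Fin n) → ℝ) (lam : ℂ) : Prop :=
  ∃ x, IsEigPair A lam x

/-- The set of moduli of eigenvalues of `A`. -/
def modSet {n k : ℕ} (A : Fin n → (Fin k → Fin n) → ℝ) : Set ℝ :=
  {r | ∃ lam, IsEig A lam ∧ r = ‖lam‖}

/-- The spectral radius: supremum of moduli of eigenvalues. -/
noncomputable def specRad {n k : ℕ} (A : Fin n → (Fin k → Fin n) → ℝ) : ℝ :=
  sSup (modSet A)

/-- The identity tensor: entries `δ_{i i2...im}`. -/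
noncomputable def idT (n k : ℕ) : Fin n → (Fin k → Fin n) → ℝ :=
  fun i j => if (∀ t, j t = i) then 1 else 0

/-- Entrywise nonnegative tensor. -/
def NonnegT {n k : ℕ} (A : Fin n → (Fin k → Fin n) → ℝ) : Prop := ∀ i j, 0 ≤ A i j

/-- `A` is an M-tensor: `A = c I - B` with `B ≥ 0` and `c > ρ(B)`. -/
def IsMTensor {n k : ℕ} (A : Fin n → (Fin k → Fin n) → ℝ) : Prop :=
  ∃ (B : Fin n → (Fin k → Fin n) → ℝ) (c : ℝ),
    NonnegT B ∧ specRad B < c ∧ ∀ i j, A i j = c * idT n k i j - B i j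

/-- `ρ(A)` is an eigenvalue of `A` and bounds the modulus of every eigenvalue
(the Yang–Yang theorem for nonnegative tensors). -/
def HasSpecRad {n k : ℕ} (A : Fin n → (Fin k → Fin n) → ℝ) : Prop :=
  IsEig A (specRad A) ∧ ∀ lam, IsEig A lam → ‖lam‖ ≤ specRad A

/-- Off-diagonal entries of `A` are all nonpositive (`A ∈ 𝕫`). -/
def ZTensor {n k : ℕ} (A : Fin n → (Fin k → Fin n) → ℝ) : Prop :=
  ∀ i j, (¬ ∀ t, j t = i) → A i j ≤ 0

/-- Irreducibility of a tensor. -/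
def IrreducibleT {n k : ℕ} (A : Fin n → (Fin k → Fin n) → ℝ) : Prop :=
  ¬ ∃ S : Set (Fin n), S.Nonempty ∧ S ≠ Set.univ ∧
      ∀ i ∈ S, ∀ j : Fin k → Fin n, (∀ t, j t ∉ S) → A i j = 0

/-- `C_i = ∑_{(i2,...,im) not all equal to i} |A_{i i2...im}|`. -/
noncomputable def offDiagSum {n k : ℕ} (A : Fin n → (Fin k → Fin n) → ℝ) (i : Fin n) : ℝ :=
  ∑ j ∈ Finset.univ.filter (fun j : Fin k → Fin n => ¬ ∀ t, j t = i), |A i j|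

/-! `λ` is an eigenvalue of `A = cI - B` exactly when `c - λ` is one of `B`, so
`c - Re λ ≤ |c - λ| ≤ ρ(B) < c`. -/

lemma tApplyC_idT {n k : ℕ} (x : Fin n → ℂ) (i : Fin n) :
    tApplyC (idT n k) x i = x i ^ k := by
  unfold tApplyC idT
  rw [Finset.sum_eq_single (fun _ => i)]
  · simp [Finset.prod_const]
  · intro j _ hj
    have : ¬ ∀ t, j t = i := fun h => hj (funext h)
    simp [this]
  · simp

lemma tApplyC_of_eq_smul_sub {n k : ℕ} {A P B : Fin n → (Fin k → Fin n) → ℝ} {c : ℝ}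
    (hA : ∀ i j, A i j = c * P i j - B i j) (x : Fin n → ℂ) (i : Fin n) :
    tApplyC A x i = c * tApplyC P x i - tApplyC B x i := by
  simp only [tApplyC, Finset.mul_sum, ← Finset.sum_sub_distrib]
  refine Finset.sum_congr rfl fun j _ => ?_
  rw [hA]
  push_cast
  ring

lemma IsEigPair.of_eq_smul_idT_sub {n k : ℕ} {A B : Fin n → (Fin k → Fin n) → ℝ} {c : ℝ}
    (hA : ∀ i j, A i j = c * idT n k i j - B i j) {lam : ℂ} {x : Fin n → ℂ}
    (h : IsEigPair A lam x) : IsEigPair B (c - lam) x := by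
  refine ⟨h.1, fun i => ?_⟩
  have hi := tApplyC_of_eq_smul_sub hA x i
  rw [tApplyC_idT, h.2 i] at hi
  linear_combination hi

lemma IsEig.of_eq_smul_idT_sub {n k : ℕ} {A B : Fin n → (Fin k → Fin n) → ℝ} {c : ℝ}
    (hA : ∀ i j, A i j = c * idT n k i j - B i j) {lam : ℂ} (h : IsEig A lam) :
    IsEig B (c - lam) :=
  let ⟨x, hx⟩ := h
  ⟨x, hx.of_eq_smul_idT_sub hA⟩

lemma IsEig.norm_le_specRad {n k : ℕ} {B : Fin n → (Fin k → Fin n) → ℝ}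
    (hbdd : BddAbove (modSet B)) {lam : ℂ} (h : IsEig B lam) : ‖lam‖ ≤ specRad B :=
  le_csSup hbdd ⟨lam, h, rfl⟩

theorem mTensor_eig_re_pos_general {n k : ℕ} (A B : Fin n → (Fin k → Fin n) → ℝ) (c : ℝ)
    (hbdd : BddAbove (modSet B)) (hc : specRad B < c)
    (hA : ∀ i j, A i j = c * idT n k i j - B i j) :
    ∀ lam : ℂ, IsEig A lam → 0 < lam.re := by
  intro lam hlam
  have hshift : ‖(c : ℂ) - lam‖ ≤ specRad B := (hlam.of_eq_smul_idT_sub hA).norm_le_specRad hbdd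
  have hre : c - lam.re ≤ ‖(c : ℂ) - lam‖ := by
    simpa using Complex.re_le_norm ((c : ℂ) - lam)
  linarith

/-- every eigenvalue of an M-tensor `A = cI - B` has positive real part. -/
theorem mTensor_eig_re_pos {n k : ℕ} (A B : Fin n → (Fin k → Fin n) → ℝ) (c : ℝ)
    (hB : NonnegT B) (hbdd : BddAbove (modSet B)) (hc : specRad B < c)
    (hA : ∀ i j, A i j = c * idT n k i j - B i j) :
    ∀ lam : ℂ, IsEig A lam → 0 < lam.re :=
  mTensor_eig_re_pos_general A B c hbdd hc hA
end

section
/- Let A be a tensor whose off-diagonal entries are all nonpositive. Then A is an M-tensor (i.e., A = cI - B for some nonnegative tensor B and real c > ρ(B)) if and only if every eigenvalue of A has a positive real part. -/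
open scoped BigOperators

/-! If `A = c I - B`, then `λ` is an eigenvalue of `A` exactly when `c - λ` is one of `B`, with the
same eigenvectors. For `B ≥ 0` this gives `Re λ ≥ c - ρ(B)`, so `c > ρ(B)` forces `Re λ > 0`.
Conversely, for `A ∈ 𝕫` and `c` at least every diagonal entry, `B = c I - A` is nonnegative, and by
Yang–Yang `c - ρ(B)` is a real eigenvalue of `A`; its positivity is `c > ρ(B)`. -/

section ShiftedTensor

variable {n k : ℕ} {A B : Fin n → (Fin k → Fin n) → ℝ} {c : ℝ}

lemma sum_idT_mul_prod (x : Fin n → ℂ) (i : Fin n) :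
    ∑ j : Fin k → Fin n, (idT n k i j : ℂ) * ∏ t, x (j t) = x i ^ k := by
  rw [Finset.sum_eq_single (fun _ => i)]
  · simp [idT, Finset.prod_const]
  · intro j _ hj
    have hne : ¬ ∀ t, j t = i := fun h => hj (funext h)
    simp [idT, hne]
  · simp

lemma tApplyC_eq_of_eq_smul_idT_sub (hAB : ∀ i j, A i j = c * idT n k i j - B i j)
    (x : Fin n → ℂ) (i : Fin n) :
    tApplyC A x i = c * x i ^ k - tApplyC B x i := by
  have hterm : ∀ j : Fin k → Fin n, (A i j : ℂ) * ∏ t, x (j t)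
      = c * ((idT n k i j : ℂ) * ∏ t, x (j t)) - (B i j : ℂ) * ∏ t, x (j t) := by
    intro j
    rw [hAB]
    push_cast
    ring
  rw [tApplyC, Finset.sum_congr rfl fun j _ => hterm j, Finset.sum_sub_distrib, ← Finset.mul_sum,
    sum_idT_mul_prod, tApplyC]

lemma isEig_iff_of_eq_smul_idT_sub (hAB : ∀ i j, A i j = c * idT n k i j - B i j) (lam : ℂ) :
    IsEig A lam ↔ IsEig B (c - lam) := by
  refine exists_congr fun x => and_congr_right fun _ => forall_congr' fun i => ?_
  rw [tApplyC_eq_of_eq_smul_idT_sub hAB, sub_mul]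
  constructor <;> intro h <;> linear_combination -h

lemma re_pos_of_isEig_of_eq_smul_idT_sub (hAB : ∀ i j, A i j = c * idT n k i j - B i j)
    (hB : ∀ mu, IsEig B mu → ‖mu‖ ≤ specRad B) (hc : specRad B < c) {lam : ℂ}
    (hlam : IsEig A lam) : 0 < lam.re := by
  have hnorm := hB _ ((isEig_iff_of_eq_smul_idT_sub hAB lam).1 hlam)
  have hre : ((c : ℂ) - lam).re ≤ ‖(c : ℂ) - lam‖ := Complex.re_le_norm _
  simp only [Complex.sub_re, Complex.ofReal_re] at hre
  linarith

lemma nonnegT_smul_idT_sub (hZ : ZTensor A) (hdiag : ∀ i, A i (fun _ => i) ≤ c) :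
    NonnegT fun i j => c * idT n k i j - A i j := by
  intro i j
  by_cases hj : ∀ t, j t = i
  · obtain rfl : j = fun _ => i := funext hj
    simpa [idT] using hdiag i
  · simpa [idT, hj] using hZ i j hj

end ShiftedTensor

/-- a tensor in `𝕫` is an M-tensor iff every eigenvalue has positive real part
(assuming Yang–Yang for nonnegative tensors). -/
theorem mTensor_iff_re_pos {n k : ℕ} (A : Fin n → (Fin k → Fin n) → ℝ) (hZ : ZTensor A)
    (hYY : ∀ B : Fin n → (Fin k → Fin n) → ℝ, NonnegT B → HasSpecRad B) :
    IsMTensor A ↔ ∀ lam : ℂ, IsEig A lam → 0 < lam.re := by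
  constructor
  · rintro ⟨B, c, hB, hc, hAB⟩ lam
    exact re_pos_of_isEig_of_eq_smul_idT_sub hAB (hYY B hB).2 hc
  · intro hre
    set c := ∑ i, |A i (fun _ => i)|
    set B : Fin n → (Fin k → Fin n) → ℝ := fun i j => c * idT n k i j - A i j
    have hAB : ∀ i j, A i j = c * idT n k i j - B i j := fun i j => by simp [B]
    have hB : NonnegT B := nonnegT_smul_idT_sub hZ fun i =>
      (le_abs_self _).trans (Finset.single_le_sum (fun i _ => abs_nonneg (A i fun _ => i))
        (Finset.mem_univ i))
    have hρ : IsEig A (c - specRad B) := by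
      rw [isEig_iff_of_eq_smul_idT_sub hAB, sub_sub_cancel]
      exact (hYY B hB).1
    have hρ_re := hre _ hρ
    simp only [Complex.sub_re, Complex.ofReal_re] at hρ_re
    exact ⟨B, c, hB, by linarith, hAB⟩
end

section
/- If a tensor A with nonpositive off-diagonal entries is strictly diagonally dominant with all nonnegative diagonal entries, then A is an M-tensor; equivalently, every eigenvalue of A has positive real part. -/
open scoped BigOperators

/-! Both claims come from a Gershgorin-type localisation: evaluating `A x^{m-1} = λ x^{[m-1]}` at
a coordinate `i` where `|x_i|` is maximal gives `|λ - a_{i…i}| ≤ C_i`, since every product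
`x_{i2} ⋯ x_{im}` is at most `|x_i|^{m-1}` in modulus. With `C_i < a_{i…i}` this forces
`Re λ > 0`. For the M-tensor claim write `A = cI - B` with `c ≥ max_i a_{i…i}`: the sign
pattern makes `B` nonnegative, and the localisation applied to `B` bounds every eigenvalue of
`B` by `c - a_{i…i} + C_i < c` for some `i`. -/

open Finset

section Gershgorin

variable {n k : ℕ} (A : Fin n → (Fin k → Fin n) → ℝ)

lemma filter_forall_eq_const (i : Fin n) :
    univ.filter (fun j : Fin k → Fin n => ∀ t, j t = i) = {fun _ => i} := by
  ext j
  simp [funext_iff]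

lemma tApplyC_eq_diag_add_offDiag (x : Fin n → ℂ) (i : Fin n) :
    tApplyC A x i = A i (fun _ => i) * x i ^ k +
      ∑ j ∈ univ.filter (fun j : Fin k → Fin n => ¬ ∀ t, j t = i), A i j * ∏ t, x (j t) := by
  rw [tApplyC, ← sum_filter_add_sum_filter_not univ (fun j : Fin k → Fin n => ∀ t, j t = i),
    filter_forall_eq_const, sum_singleton, prod_const, card_univ, Fintype.card_fin]

lemma IsEig.exists_norm_sub_diag_le {lam : ℂ} (hlam : IsEig A lam) :
    ∃ i, ‖lam - A i (fun _ => i)‖ ≤ offDiagSum A i := by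
  obtain ⟨x, hx0, hx⟩ := hlam
  obtain ⟨i₀, hi₀⟩ := Function.ne_iff.mp hx0
  obtain ⟨i, -, hmax⟩ := exists_max_image univ (fun i => ‖x i‖) ⟨i₀, mem_univ i₀⟩
  have hpos : 0 < ‖x i‖ ^ k :=
    pow_pos ((norm_pos_iff.mpr hi₀).trans_le (hmax i₀ (mem_univ _))) k
  refine ⟨i, le_of_mul_le_mul_right ?_ hpos⟩
  have heq : (lam - A i (fun _ => i)) * x i ^ k =
      ∑ j ∈ univ.filter (fun j : Fin k → Fin n => ¬ ∀ t, j t = i), A i j * ∏ t, x (j t) := by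
    rw [sub_mul, ← hx i, tApplyC_eq_diag_add_offDiag, add_sub_cancel_left]
  calc ‖lam - A i (fun _ => i)‖ * ‖x i‖ ^ k
      = ‖∑ j ∈ univ.filter (fun j : Fin k → Fin n => ¬ ∀ t, j t = i),
          (A i j : ℂ) * ∏ t, x (j t)‖ := by rw [← heq, norm_mul, norm_pow]
    _ ≤ ∑ j ∈ univ.filter (fun j : Fin k → Fin n => ¬ ∀ t, j t = i), |A i j| * ‖x i‖ ^ k := by
        refine (norm_sum_le _ _).trans (sum_le_sum fun j _ => ?_)
        rw [norm_mul, Complex.norm_real, Real.norm_eq_abs, norm_prod]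
        gcongr
        calc ∏ t, ‖x (j t)‖ ≤ ∏ _t : Fin k, ‖x i‖ :=
              prod_le_prod (fun t _ => norm_nonneg _) fun t _ => hmax _ (mem_univ _)
          _ = ‖x i‖ ^ k := by simp
    _ = offDiagSum A i * ‖x i‖ ^ k := by rw [offDiagSum, sum_mul]

end Gershgorin

variable {n k : ℕ}

lemma specRad_lt_of_forall_isEig_exists_le {B : Fin n → (Fin k → Fin n) → ℝ} {c : ℝ}
    (hc : 0 < c) (g : Fin n → ℝ) (hg : ∀ i, g i < c)
    (hB : ∀ μ, IsEig B μ → ∃ i, ‖μ‖ ≤ g i) : specRad B < c := by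
  rcases (modSet B).eq_empty_or_nonempty with hempty | ⟨-, μ, hμ, -⟩
  · simpa [specRad, hempty] using hc
  obtain ⟨i, -, hmax⟩ := exists_max_image univ g ⟨(hB μ hμ).choose, mem_univ _⟩
  refine lt_of_le_of_lt (csSup_le ⟨_, μ, hμ, rfl⟩ ?_) (hg i)
  rintro _ ⟨ν, hν, rfl⟩
  obtain ⟨i', hi'⟩ := hB ν hν
  exact hi'.trans (hmax i' (mem_univ _))

lemma offDiagSum_const_mul_idT_sub (A : Fin n → (Fin k → Fin n) → ℝ) (c : ℝ) (i : Fin n) :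
    offDiagSum (fun i j => c * idT n k i j - A i j) i = offDiagSum A i := by
  refine sum_congr rfl fun j hj => ?_
  simp only [idT, if_neg (mem_filter.mp hj).2, mul_zero, zero_sub, abs_neg]

lemma isMTensor_of_strictDiagDom {A : Fin n → (Fin k → Fin n) → ℝ} (hZ : ZTensor A)
    (hdd : ∀ i, offDiagSum A i < A i (fun _ => i)) :
    IsMTensor A := by
  obtain ⟨M, hM⟩ := (Set.finite_range fun i => A i (fun _ => i)).bddAbove
  set c := max M 1
  have hc : ∀ i, A i (fun _ => i) ≤ c := fun i => (hM ⟨i, rfl⟩).trans (le_max_left _ _)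
  set B : Fin n → (Fin k → Fin n) → ℝ := fun i j => c * idT n k i j - A i j
  have hBdiag : ∀ i, B i (fun _ => i) = c - A i (fun _ => i) := fun i => by
    simp [B, idT]
  have hBnonneg : NonnegT B := by
    intro i j
    by_cases hj : ∀ t, j t = i
    · obtain rfl : j = fun _ => i := funext hj
      linarith [hBdiag i, hc i]
    · simpa [B, idT, hj] using hZ i j hj
  refine ⟨B, c, hBnonneg, ?_, fun i j => by simp [B]⟩
  refine specRad_lt_of_forall_isEig_exists_le (lt_of_lt_of_le one_pos (le_max_right _ _))
    (fun i => c - A i (fun _ => i) + offDiagSum A i) (fun i => by linarith [hdd i]) ?_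
  intro μ hμ
  obtain ⟨i, hi⟩ := hμ.exists_norm_sub_diag_le
  refine ⟨i, ?_⟩
  rw [hBdiag, offDiagSum_const_mul_idT_sub] at hi
  have hnorm : ‖((c - A i (fun _ => i) : ℝ) : ℂ)‖ = c - A i (fun _ => i) := by
    rw [Complex.norm_real, Real.norm_of_nonneg (sub_nonneg.mpr (hc i))]
  linarith [norm_le_norm_add_norm_sub' μ ((c - A i (fun _ => i) : ℝ) : ℂ)]

lemma IsEig.re_pos_of_strictDiagDom {A : Fin n → (Fin k → Fin n) → ℝ}
    (hdd : ∀ i, offDiagSum A i < A i (fun _ => i)) {lam : ℂ} (hlam : IsEig A lam) :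
    0 < lam.re := by
  obtain ⟨i, hi⟩ := hlam.exists_norm_sub_diag_le
  have hre := Complex.re_le_norm (A i (fun _ => i) - lam)
  rw [norm_sub_rev, Complex.sub_re, Complex.ofReal_re] at hre
  linarith [hdd i]

theorem strictDiagDom_mTensor_general {n k : ℕ} (A : Fin n → (Fin k → Fin n) → ℝ)
    (hZ : ZTensor A) (hdiag : ∀ i, 0 ≤ A i (fun _ => i))
    (hdd : ∀ i, offDiagSum A i < |A i (fun _ => i)|) :
    IsMTensor A ∧ ∀ lam : ℂ, IsEig A lam → 0 < lam.re := by
  have hdd' : ∀ i, offDiagSum A i < A i (fun _ => i) := fun i => by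
    simpa only [abs_of_nonneg (hdiag i)] using hdd i
  exact ⟨isMTensor_of_strictDiagDom hZ hdd', fun _ hlam => hlam.re_pos_of_strictDiagDom hdd'⟩

/-- a strictly diagonally dominant tensor in `𝕫` with nonnegative diagonal is an
M-tensor; equivalently all its eigenvalues have positive real part. -/
theorem strictDiagDom_mTensor {n k : ℕ} (A : Fin n → (Fin k → Fin n) → ℝ)
    (hZ : ZTensor A) (hdiag : ∀ i, 0 ≤ A i (fun _ => i))
    (hdd : ∀ i, offDiagSum A i < |A i (fun _ => i)|)
    (hYY : ∀ C : Fin n → (Fin k → Fin n) → ℝ, NonnegT C → HasSpecRad C) :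
    IsMTensor A ∧ ∀ lam : ℂ, IsEig A lam → 0 < lam.re :=
  strictDiagDom_mTensor_general A hZ hdiag hdd
end

section
/- Let A be any m-order n-dimensional real tensor and λ an eigenvalue with eigenvector x, and let k be an index with |x_k| = max_i |x_i|. Then |λ - A_{k k...k}| ≤ Σ_{(i2,...,im) not all equal to k} |A_{k i2...im}| (a Gershgorin-type bound for tensor eigenvalues). -/
open scoped BigOperators

/-! As for matrices: read off the eigen-equation in the row `k0` of a largest entry of `x`, move the
diagonal term `A_{k0…k0} x_{k0}^{m-1}` to the left, bound every remaining product of `m - 1` entries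
of `x` by `|x_{k0}|^{m-1}`, and divide by `|x_{k0}|^{m-1} > 0`. -/

lemma sum_eq_const_add_sum_filter_not_const {ι κ M : Type*} [Fintype ι] [DecidableEq ι]
    [Fintype κ] [DecidableEq κ] [AddCommMonoid M] (f : (κ → ι) → M) (i : ι) :
    ∑ j, f j =
      f (fun _ => i) + ∑ j ∈ Finset.univ.filter (fun j : κ → ι => ¬ ∀ t, j t = i), f j := by
  rw [← Finset.sum_filter_add_sum_filter_not Finset.univ (fun j : κ → ι => ∀ t, j t = i),
    Finset.sum_eq_single_of_mem (fun _ => i) (by simp)]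
  intro j hj hne
  exact absurd (funext (Finset.mem_filter.mp hj).2) hne

lemma norm_prod_comp_le_pow {𝕜 ι κ : Type*} [NormedField 𝕜] [Fintype κ] (x : ι → 𝕜)
    (j : κ → ι) {c : ℝ} (hc : ∀ i, ‖x i‖ ≤ c) : ‖∏ t, x (j t)‖ ≤ c ^ Fintype.card κ := by
  rw [norm_prod, ← Finset.card_univ, ← Finset.prod_const]
  exact Finset.prod_le_prod (fun _ _ => norm_nonneg _) fun t _ => hc (j t)

lemma IsEigPair.sub_diag_mul_pow_eq {n k : ℕ} {A : Fin n → (Fin k → Fin n) → ℝ} {lam : ℂ}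
    {x : Fin n → ℂ} (hpair : IsEigPair A lam x) (i : Fin n) :
    (lam - A i (fun _ => i)) * x i ^ k =
      ∑ j ∈ Finset.univ.filter (fun j : Fin k → Fin n => ¬ ∀ t, j t = i),
        (A i j : ℂ) * ∏ t, x (j t) := by
  have heq := hpair.2 i
  rw [tApplyC, sum_eq_const_add_sum_filter_not_const _ i] at heq
  simp only [Finset.prod_const, Finset.card_univ, Fintype.card_fin] at heq
  rw [sub_mul, ← heq, add_sub_cancel_left]
  -- the filters differ only in their `Decidable` instances (`Nat.decidableForallFin` here)
  congr 2

lemma norm_sum_offDiag_le {n k : ℕ} (A : Fin n → (Fin k → Fin n) → ℝ) (x : Fin n → ℂ)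
    (i : Fin n) {c : ℝ} (hc : ∀ i, ‖x i‖ ≤ c) :
    ‖∑ j ∈ Finset.univ.filter (fun j : Fin k → Fin n => ¬ ∀ t, j t = i),
        (A i j : ℂ) * ∏ t, x (j t)‖ ≤ offDiagSum A i * c ^ k := by
  rw [offDiagSum, Finset.sum_mul]
  refine (norm_sum_le _ _).trans (Finset.sum_le_sum fun j _ => ?_)
  rw [norm_mul, Complex.norm_real, Real.norm_eq_abs]
  have := norm_prod_comp_le_pow x j hc
  rw [Fintype.card_fin] at this
  exact mul_le_mul_of_nonneg_left this (abs_nonneg _)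

lemma norm_pos_of_forall_norm_le {ι E : Type*} [NormedAddGroup E] {x : ι → E} (hx : x ≠ 0) {i₀ : ι}
    (hmax : ∀ i, ‖x i‖ ≤ ‖x i₀‖) : 0 < ‖x i₀‖ := by
  obtain ⟨i, hi⟩ := Function.ne_iff.mp hx
  exact (norm_pos_iff.mpr hi).trans_le (hmax i)

/-- Gershgorin-type bound — if `|x_{k0}|` is maximal then
`|λ - A_{k0...k0}| ≤ C_{k0}`. -/
theorem gershgorin_tensor {n k : ℕ} (A : Fin n → (Fin k → Fin n) → ℝ) (lam : ℂ)
    (x : Fin n → ℂ) (hpair : IsEigPair A lam x) (k0 : Fin n)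
    (hmax : ∀ i, ‖x i‖ ≤ ‖x k0‖) :
    ‖lam - (A k0 (fun _ => k0) : ℝ)‖ ≤ offDiagSum A k0 := by
  have hpos : 0 < ‖x k0‖ ^ k := pow_pos (norm_pos_of_forall_norm_le hpair.1 hmax) k
  refine le_of_mul_le_mul_right ?_ hpos
  calc ‖lam - (A k0 (fun _ => k0) : ℝ)‖ * ‖x k0‖ ^ k
      = ‖(lam - A k0 (fun _ => k0)) * x k0 ^ k‖ := by rw [norm_mul, norm_pow]
    _ ≤ offDiagSum A k0 * ‖x k0‖ ^ k := by
      rw [hpair.sub_diag_mul_pow_eq k0]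
      exact norm_sum_offDiag_le A x k0 hmax
end

section
/- If A is an irreducible M-tensor, then τ(A) = c - ρ(B) (where A = cI - B, B nonnegative irreducible, c > ρ(B)) is the unique eigenvalue of A admitting a positive eigenvector. -/
open scoped BigOperators

lemma tApplyC_eq_mul_pow_sub {n k : ℕ} {A B : Fin n → (Fin k → Fin n) → ℝ} {c : ℝ}
    (hA : ∀ i j, A i j = c * idT n k i j - B i j) (x : Fin n → ℂ) (i : Fin n) :
    tApplyC A x i = c * x i ^ k - tApplyC B x i := by
  rw [← tApplyC_idT (k := k) x i]
  simp only [tApplyC, hA, Finset.mul_sum, ← Finset.sum_sub_distrib]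
  push_cast
  exact Finset.sum_congr rfl fun j _ => by ring

lemma isEigPair_iff_of_eq_mul_idT_sub {n k : ℕ} {A B : Fin n → (Fin k → Fin n) → ℝ} {c : ℝ}
    (hA : ∀ i j, A i j = c * idT n k i j - B i j) (μ : ℂ) (x : Fin n → ℂ) :
    IsEigPair A μ x ↔ IsEigPair B (c - μ) x := by
  simp only [IsEigPair, tApplyC_eq_mul_pow_sub hA]
  refine and_congr_right fun _ => forall_congr' fun i => ?_
  constructor <;> intro h <;> linear_combination -h

theorem irred_mTensor_unique_pos_eig_general {n k : ℕ} (A B : Fin n → (Fin k → Fin n) → ℝ) (c : ℝ)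
    (hA : ∀ i j, A i j = c * idT n k i j - B i j)
    (hPF : ∃ x0 : Fin n → ℝ, (∀ i, 0 < x0 i) ∧ 0 < specRad B ∧
      IsEigPair B ((specRad B : ℝ) : ℂ) (fun i => (x0 i : ℂ)))
    (hPFuniq : ∀ (μ : ℂ) (x : Fin n → ℝ), x ≠ 0 → (∀ i, 0 ≤ x i) →
      IsEigPair B μ (fun i => (x i : ℂ)) → μ = (specRad B : ℂ)) :
    (∃ x : Fin n → ℝ, (∀ i, 0 < x i) ∧
      IsEigPair A ((c - specRad B : ℝ) : ℂ) (fun i => (x i : ℂ))) ∧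
    (∀ (μ : ℂ) (x : Fin n → ℝ), (∀ i, 0 < x i) →
      IsEigPair A μ (fun i => (x i : ℂ)) → μ = ((c - specRad B : ℝ) : ℂ)) := by
  constructor
  · obtain ⟨x0, hx0_pos, -, heig⟩ := hPF
    refine ⟨x0, hx0_pos, (isEigPair_iff_of_eq_mul_idT_sub hA _ _).2 ?_⟩
    rwa [Complex.ofReal_sub, sub_sub_cancel]
  · intro μ x hx heig
    have hx_ne : x ≠ 0 := fun h => heig.1 (funext fun i => by simp [h])
    have hμ := hPFuniq _ x hx_ne (fun i => (hx i).le)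
      ((isEigPair_iff_of_eq_mul_idT_sub hA μ _).1 heig)
    push_cast
    linear_combination -hμ

/-- for an irreducible M-tensor `A = cI - B`, `τ(A) = c - ρ(B)` is the unique
eigenvalue of `A` admitting a positive eigenvector (assuming the Chang–Pearson–Zhang
Perron–Frobenius theorem for the irreducible nonnegative tensor `B`). -/
theorem irred_mTensor_unique_pos_eig {n k : ℕ} (A B : Fin n → (Fin k → Fin n) → ℝ) (c : ℝ)
    (hB : NonnegT B) (hirr : IrreducibleT B) (hc : specRad B < c)
    (hA : ∀ i j, A i j = c * idT n k i j - B i j)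
    (hPF : ∃ x0 : Fin n → ℝ, (∀ i, 0 < x0 i) ∧ 0 < specRad B ∧
      IsEigPair B ((specRad B : ℝ) : ℂ) (fun i => (x0 i : ℂ)))
    (hPFuniq : ∀ (μ : ℂ) (x : Fin n → ℝ), x ≠ 0 → (∀ i, 0 ≤ x i) →
      IsEigPair B μ (fun i => (x i : ℂ)) → μ = (specRad B : ℂ)) :
    (∃ x : Fin n → ℝ, (∀ i, 0 < x i) ∧
      IsEigPair A ((c - specRad B : ℝ) : ℂ) (fun i => (x i : ℂ))) ∧
    (∀ (μ : ℂ) (x : Fin n → ℝ), (∀ i, 0 < x i) →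
      IsEigPair A μ (fun i => (x i : ℂ)) → μ = ((c - specRad B : ℝ) : ℂ)) :=
  irred_mTensor_unique_pos_eig_general A B c hA hPF hPFuniq
end

section
/- For any nonnegative m-order n-dimensional tensor B and any strictly positive vector x ∈ ℝ^n, min_i (B x^{m-1})_i / x_i^{m-1} ≤ ρ(B) ≤ max_i (B x^{m-1})_i / x_i^{m-1}. -/
open scoped BigOperators

/-! An eigenpair `A u^k = λ u^{[k]}` makes `|u|` subinvariant for `‖λ‖`; comparing `|u|` with the
smallest multiple `c x` lying above it, which touches it at some index `l`, gives
`‖λ‖ ≤ (A x^k)_l / x_l^k`. This is the upper bound.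

For the lower bound, `μ = min_i (B x^k)_i / x_i^k` belongs to the Collatz–Wielandt set of `B`. For a
positive tensor the supremum of that set is attained by a nonnegative vector, and it is an
eigenvalue there: where the subinvariance inequality were strict, raising that coordinate would
make it strict everywhere and push the supremum up. Applying this to `B + δ` and letting `δ → 0`
along a convergent subsequence yields a real eigenvalue of `B` that is at least `μ`. When `k = 0`
the tensor action is constant in `x`, and the given eigenpair of `ρ(B)` forces `(B x^0)_i = ρ(B)`
for all `i`. -/

open Filter Topology Finset

section TensorAction

variable {n k : ℕ}

lemma tApplyR_nonneg {A : Fin n → (Fin k → Fin n) → ℝ} (hA : NonnegT A) {z : Fin n → ℝ}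
    (hz : 0 ≤ z) (i : Fin n) : 0 ≤ tApplyR A z i :=
  sum_nonneg fun j _ => mul_nonneg (hA i j) (prod_nonneg fun _ _ => hz _)

lemma tApplyR_mono {A : Fin n → (Fin k → Fin n) → ℝ} (hA : NonnegT A) {z w : Fin n → ℝ}
    (hz : 0 ≤ z) (hzw : z ≤ w) (i : Fin n) : tApplyR A z i ≤ tApplyR A w i :=
  sum_le_sum fun j _ => mul_le_mul_of_nonneg_left
    (prod_le_prod (fun _ _ => hz _) (fun _ _ => hzw _)) (hA i j)

lemma tApplyR_lt_tApplyR {A : Fin n → (Fin k → Fin n) → ℝ} (hA : ∀ i j, 0 < A i j) (hk : k ≠ 0)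
    {z w : Fin n → ℝ} (hz : 0 ≤ z) (hzw : z ≤ w) {l : Fin n} (hl : z l < w l) (i : Fin n) :
    tApplyR A z i < tApplyR A w i := by
  refine sum_lt_sum (fun j _ => mul_le_mul_of_nonneg_left
    (prod_le_prod (fun _ _ => hz _) (fun _ _ => hzw _)) (hA i j).le) ⟨fun _ => l, mem_univ _, ?_⟩
  simp only [prod_const, card_univ, Fintype.card_fin]
  exact mul_lt_mul_of_pos_left (pow_lt_pow_left₀ hl (hz l) hk) (hA i _)

lemma tApplyR_le_tApplyR_of_le {A A' : Fin n → (Fin k → Fin n) → ℝ} (hAA' : ∀ i j, A i j ≤ A' i j)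
    {z : Fin n → ℝ} (hz : 0 ≤ z) (i : Fin n) : tApplyR A z i ≤ tApplyR A' z i :=
  sum_le_sum fun j _ => mul_le_mul_of_nonneg_right (hAA' i j) (prod_nonneg fun _ _ => hz _)

lemma tApplyR_smul (A : Fin n → (Fin k → Fin n) → ℝ) (c : ℝ) (z : Fin n → ℝ) (i : Fin n) :
    tApplyR A (c • z) i = c ^ k * tApplyR A z i := by
  simp only [tApplyR, Pi.smul_apply, smul_eq_mul, prod_mul_distrib, prod_const, card_univ,
    Fintype.card_fin, mul_sum]
  exact sum_congr rfl fun j _ => by ring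

lemma continuous_tApplyR (i : Fin n) :
    Continuous fun p : (Fin n → (Fin k → Fin n) → ℝ) × (Fin n → ℝ) => tApplyR p.1 p.2 i := by
  unfold tApplyR
  fun_prop

lemma Filter.Tendsto.tApplyR {ι : Type*} {l : Filter ι} {A : Fin n → (Fin k → Fin n) → ℝ}
    {z : Fin n → ℝ} {As : ι → Fin n → (Fin k → Fin n) → ℝ} {zs : ι → Fin n → ℝ}
    (hA : Tendsto As l (𝓝 A)) (hz : Tendsto zs l (𝓝 z)) (i : Fin n) :
    Tendsto (fun j => tApplyR (As j) (zs j) i) l (𝓝 (tApplyR A z i)) := by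
  have h := ((continuous_tApplyR i).tendsto (A, z)).comp (hA.prodMk_nhds hz)
  simpa only [Function.comp_def] using h

lemma tApplyC_ofReal (A : Fin n → (Fin k → Fin n) → ℝ) (z : Fin n → ℝ) (i : Fin n) :
    tApplyC A (fun i => (z i : ℂ)) i = tApplyR A z i := by
  simp [tApplyC, tApplyR]

lemma norm_tApplyC_le {A : Fin n → (Fin k → Fin n) → ℝ} (hA : NonnegT A) (u : Fin n → ℂ)
    (i : Fin n) : ‖tApplyC A u i‖ ≤ tApplyR A (fun i => ‖u i‖) i := by
  refine (norm_sum_le _ _).trans (sum_le_sum fun j _ => ?_)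
  rw [norm_mul, norm_prod, Complex.norm_real, Real.norm_of_nonneg (hA i j)]

lemma isEigPair_ofReal {A : Fin n → (Fin k → Fin n) → ℝ} {lam : ℝ} {z : Fin n → ℝ} (hz : z ≠ 0)
    (h : ∀ i, tApplyR A z i = lam * z i ^ k) : IsEigPair A lam (fun i => (z i : ℂ)) := by
  refine ⟨fun h0 => hz (funext fun i => by simpa using congrFun h0 i), fun i => ?_⟩
  rw [tApplyC_ofReal, h i]
  push_cast
  rfl

end TensorAction

section CollatzWielandt

variable {n k : ℕ}

/-- Normalising to the simplex makes this the projection of a closed subset of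
`ℝ × stdSimplex ℝ (Fin n)`, hence closed. -/
def collatzWielandtSet (A : Fin n → (Fin k → Fin n) → ℝ) : Set ℝ :=
  {lam | ∃ z ∈ stdSimplex ℝ (Fin n), ∀ i, lam * z i ^ k ≤ tApplyR A z i}

lemma ne_zero_of_mem_stdSimplex {ι : Type*} [Fintype ι] {z : ι → ℝ} (hz : z ∈ stdSimplex ℝ ι) :
    z ≠ 0 := by
  rintro rfl
  simpa using hz.2

lemma mem_collatzWielandtSet_of_le {A : Fin n → (Fin k → Fin n) → ℝ} {lam : ℝ} {z : Fin n → ℝ}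
    (hz : 0 ≤ z) (hz0 : z ≠ 0) (h : ∀ i, lam * z i ^ k ≤ tApplyR A z i) :
    lam ∈ collatzWielandtSet A := by
  obtain ⟨l, hl⟩ := Function.ne_iff.mp hz0
  have hs : 0 < ∑ i, z i := sum_pos' (fun i _ => hz i) ⟨l, mem_univ l, (hz l).lt_of_ne' hl⟩
  set c := (∑ i, z i)⁻¹
  refine ⟨c • z, ⟨fun i => mul_nonneg (inv_nonneg.2 hs.le) (hz i), ?_⟩, fun i => ?_⟩
  · simp only [Pi.smul_apply, smul_eq_mul, ← mul_sum, c, inv_mul_cancel₀ hs.ne']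
  · rw [tApplyR_smul, Pi.smul_apply, smul_eq_mul, mul_pow, mul_left_comm]
    exact mul_le_mul_of_nonneg_left (h i) (pow_nonneg (inv_nonneg.2 hs.le) k)

lemma collatzWielandtSet_mono {A A' : Fin n → (Fin k → Fin n) → ℝ}
    (hAA' : ∀ i j, A i j ≤ A' i j) : collatzWielandtSet A ⊆ collatzWielandtSet A' :=
  fun _ ⟨z, hz, h⟩ => ⟨z, hz, fun i => (h i).trans (tApplyR_le_tApplyR_of_le hAA' hz.1 i)⟩

lemma inf'_ratio_mem_collatzWielandtSet (hne : (univ : Finset (Fin n)).Nonempty)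
    (A : Fin n → (Fin k → Fin n) → ℝ) {x : Fin n → ℝ} (hx : ∀ i, 0 < x i) :
    univ.inf' hne (fun i => tApplyR A x i / x i ^ k) ∈ collatzWielandtSet A := by
  obtain ⟨l⟩ := hne
  refine mem_collatzWielandtSet_of_le (fun i => (hx i).le) (fun h0 => ?_) fun i => ?_
  · simpa [h0] using hx l
  · exact (le_div_iff₀ (pow_pos (hx i) k)).mp (inf'_le _ (mem_univ i))

lemma le_sup'_ratio_of_le {A : Fin n → (Fin k → Fin n) → ℝ} (hA : NonnegT A)
    (hne : (univ : Finset (Fin n)).Nonempty) {x : Fin n → ℝ} (hx : ∀ i, 0 < x i) {lam : ℝ}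
    {z : Fin n → ℝ} (hz : 0 ≤ z) (hz0 : z ≠ 0) (h : ∀ i, lam * z i ^ k ≤ tApplyR A z i) :
    lam ≤ univ.sup' hne (fun i => tApplyR A x i / x i ^ k) := by
  set M := univ.sup' hne (fun i => tApplyR A x i / x i ^ k)
  obtain ⟨l, -, hl⟩ := exists_mem_eq_sup' hne (fun i => z i / x i)
  set c := univ.sup' hne (fun i => z i / x i)
  have hle_c : ∀ i, z i / x i ≤ c := fun i => le_sup' (fun i => z i / x i) (mem_univ i)
  have hzc : z ≤ c • x := fun i => (div_le_iff₀ (hx i)).mp (hle_c i)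
  have hc : 0 < c := by
    obtain ⟨i, hi⟩ := Function.ne_iff.mp hz0
    exact (div_pos ((hz i).lt_of_ne' hi) (hx i)).trans_le (hle_c i)
  have hzl : z l = c * x l := by rw [hl, div_mul_cancel₀ _ (hx l).ne']
  have hAx : tApplyR A x l ≤ M * x l ^ k :=
    (div_le_iff₀ (pow_pos (hx l) k)).mp (le_sup' (fun i => tApplyR A x i / x i ^ k) (mem_univ l))
  refine le_of_mul_le_mul_right ?_ (pow_pos (mul_pos hc (hx l)) k)
  calc lam * (c * x l) ^ k = lam * z l ^ k := by rw [hzl]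
    _ ≤ tApplyR A z l := h l
    _ ≤ tApplyR A (c • x) l := tApplyR_mono hA hz hzc l
    _ = c ^ k * tApplyR A x l := tApplyR_smul A c x l
    _ ≤ c ^ k * (M * x l ^ k) := mul_le_mul_of_nonneg_left hAx (pow_nonneg hc.le k)
    _ = M * (c * x l) ^ k := by ring

lemma bddAbove_collatzWielandtSet {A : Fin n → (Fin k → Fin n) → ℝ} (hA : NonnegT A)
    (hne : (univ : Finset (Fin n)).Nonempty) : BddAbove (collatzWielandtSet A) :=
  ⟨_, fun _ ⟨_, hz, h⟩ =>
    le_sup'_ratio_of_le hA hne (fun _ => one_pos) hz.1 (ne_zero_of_mem_stdSimplex hz) h⟩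

lemma isClosed_collatzWielandtSet (A : Fin n → (Fin k → Fin n) → ℝ) :
    IsClosed (collatzWielandtSet A) := by
  have hproj : collatzWielandtSet A = Prod.fst ''
      {p : ℝ × stdSimplex ℝ (Fin n) | ∀ i, p.1 * p.2.1 i ^ k ≤ tApplyR A p.2.1 i} := by
    ext lam
    simp [collatzWielandtSet]
  rw [hproj, Set.ofPred_forall]
  have hval : Continuous fun p : ℝ × stdSimplex ℝ (Fin n) => (p.2 : Fin n → ℝ) :=
    continuous_subtype_val.comp continuous_snd
  refine isClosedMap_fst_of_compactSpace _ (isClosed_iInter fun i => isClosed_le ?_ ?_)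
  · exact continuous_fst.mul (((continuous_apply i).comp hval).pow k)
  · exact (continuous_tApplyR i).comp (continuous_const.prodMk hval)

lemma exists_gt_mem_collatzWielandtSet {A : Fin n → (Fin k → Fin n) → ℝ} {r : ℝ}
    {z : Fin n → ℝ} (hz : 0 ≤ z) (hz0 : z ≠ 0) (h : ∀ i, r * z i ^ k < tApplyR A z i) :
    ∃ lam > r, lam ∈ collatzWielandtSet A := by
  have hnear : ∀ᶠ lam in 𝓝 r, ∀ i, lam * z i ^ k < tApplyR A z i :=
    eventually_all.2 fun i => (by fun_prop : Continuous fun lam : ℝ => lam * z i ^ k).continuousAt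
      |>.eventually_lt continuousAt_const (h i)
  obtain ⟨lam, hlam, hlt⟩ := hnear.exists_gt
  exact ⟨lam, hlam, mem_collatzWielandtSet_of_le hz hz0 fun i => (hlt i).le⟩

lemma exists_strictly_subinvariant_of_ne {A : Fin n → (Fin k → Fin n) → ℝ}
    (hA : ∀ i j, 0 < A i j) (hk : k ≠ 0) {r : ℝ} {z : Fin n → ℝ} (hz : 0 ≤ z)
    (h : ∀ i, r * z i ^ k ≤ tApplyR A z i) {l : Fin n} (hl : r * z l ^ k ≠ tApplyR A z l) :
    ∃ w, 0 ≤ w ∧ w ≠ 0 ∧ ∀ i, r * w i ^ k < tApplyR A w i := by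
  have hnear : ∀ᶠ ε in 𝓝 (0 : ℝ), r * (z l + ε) ^ k < tApplyR A z l :=
    (by fun_prop : Continuous fun ε : ℝ => r * (z l + ε) ^ k).continuousAt.eventually_lt
      continuousAt_const (by simpa using (h l).lt_of_ne hl)
  obtain ⟨ε, hε, hεl⟩ := hnear.exists_gt
  set w := z + Pi.single l ε
  have hzw : z ≤ w := le_add_of_nonneg_right (Pi.single_nonneg.2 hε.le)
  have hwl : w l = z l + ε := by simp [w]
  have hlt : ∀ i, tApplyR A z i < tApplyR A w i :=
    tApplyR_lt_tApplyR hA hk hz hzw (by rw [hwl]; linarith)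
  refine ⟨w, hz.trans hzw, fun h0 => ?_, fun i => ?_⟩
  · have := congrFun h0 l
    rw [hwl, Pi.zero_apply] at this
    linarith [show 0 ≤ z l from hz l]
  · by_cases hi : i = l
    · subst hi
      rw [hwl]
      exact hεl.trans (hlt i)
    · have hwi : w i = z i := by simp [w, hi]
      rw [hwi]
      exact (h i).trans_lt (hlt i)

theorem exists_eigenvector_sSup_collatzWielandtSet {A : Fin n → (Fin k → Fin n) → ℝ}
    (hA : ∀ i j, 0 < A i j) (hk : k ≠ 0) (hne : (univ : Finset (Fin n)).Nonempty)
    (hS : (collatzWielandtSet A).Nonempty) :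
    ∃ z ∈ stdSimplex ℝ (Fin n), ∀ i, tApplyR A z i = sSup (collatzWielandtSet A) * z i ^ k := by
  have hbdd := bddAbove_collatzWielandtSet (fun i j => (hA i j).le) hne
  obtain ⟨z, hz, hsub⟩ := (isClosed_collatzWielandtSet A).csSup_mem hS hbdd
  refine ⟨z, hz, fun i => by_contra fun hi => ?_⟩
  obtain ⟨w, hw, hw0, hlt⟩ := exists_strictly_subinvariant_of_ne hA hk hz.1 hsub (Ne.symm hi)
  obtain ⟨lam, hlam, hmem⟩ := exists_gt_mem_collatzWielandtSet hw hw0 hlt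
  exact (le_csSup hbdd hmem).not_gt hlam

theorem exists_eigenvector_ge_of_mem_collatzWielandtSet {B : Fin n → (Fin k → Fin n) → ℝ}
    (hB : NonnegT B) (hk : k ≠ 0) (hne : (univ : Finset (Fin n)).Nonempty) {m : ℝ}
    (hm : m ∈ collatzWielandtSet B) :
    ∃ lam, m ≤ lam ∧ ∃ y ∈ stdSimplex ℝ (Fin n), ∀ i, tApplyR B y i = lam * y i ^ k := by
  set A : ℝ → Fin n → (Fin k → Fin n) → ℝ := fun δ i j => B i j + δ
  set δ : ℕ → ℝ := fun j => 1 / (j + 1)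
  have hδ : ∀ j, 0 < δ j ∧ δ j ≤ 1 := fun j =>
    ⟨by positivity, div_le_one_of_le₀ (by linarith [j.cast_nonneg (α := ℝ)]) (by positivity)⟩
  set C := sSup (collatzWielandtSet (A 1))
  have happrox : ∀ j, ∃ p ∈ Set.Icc m C ×ˢ stdSimplex ℝ (Fin n),
      ∀ i, tApplyR (A (δ j)) p.2 i = p.1 * p.2 i ^ k := by
    intro j
    have hpos : ∀ i jj, 0 < A (δ j) i jj := fun i jj => add_pos_of_nonneg_of_pos (hB i jj) (hδ j).1
    have hBA : collatzWielandtSet B ⊆ collatzWielandtSet (A (δ j)) :=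
      collatzWielandtSet_mono fun i jj => le_add_of_nonneg_right (hδ j).1.le
    have hA1 : collatzWielandtSet (A (δ j)) ⊆ collatzWielandtSet (A 1) :=
      collatzWielandtSet_mono fun i jj => by simpa [A] using (hδ j).2
    obtain ⟨z, hz, heig⟩ := exists_eigenvector_sSup_collatzWielandtSet hpos hk hne ⟨m, hBA hm⟩
    have hm_le : m ≤ sSup (collatzWielandtSet (A (δ j))) :=
      le_csSup (bddAbove_collatzWielandtSet (fun i jj => (hpos i jj).le) hne) (hBA hm)
    have hle_C : sSup (collatzWielandtSet (A (δ j))) ≤ C :=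
      csSup_le_csSup
        (bddAbove_collatzWielandtSet (fun i jj => add_nonneg (hB i jj) zero_le_one) hne)
        ⟨m, hBA hm⟩ hA1
    exact ⟨(_, z), ⟨⟨hm_le, hle_C⟩, hz⟩, heig⟩
  choose p hp heig using happrox
  obtain ⟨⟨lam, y⟩, ⟨hlam, hy⟩, φ, hφ, hconv⟩ :=
    (isCompact_Icc.prod (isCompact_stdSimplex ℝ (Fin n))).tendsto_subseq hp
  have hδ0 : Tendsto (fun j => A (δ (φ j))) atTop (𝓝 B) := by
    have hA0 : A 0 = B := by simp [A]
    rw [← hA0]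
    exact ((by fun_prop : Continuous A).tendsto 0).comp
      (tendsto_one_div_add_atTop_nhds_zero_nat.comp hφ.tendsto_atTop)
  have hlam' : Tendsto (fun j => (p (φ j)).1) atTop (𝓝 lam) := (continuous_fst.tendsto _).comp hconv
  have hy' : Tendsto (fun j => (p (φ j)).2) atTop (𝓝 y) := (continuous_snd.tendsto _).comp hconv
  refine ⟨lam, hlam.1, y, hy, fun i => tendsto_nhds_unique (hδ0.tApplyR hy' i) ?_⟩
  exact (hlam'.mul ((tendsto_pi_nhds.1 hy' i).pow k)).congr fun j => (heig (φ j) i).symm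

end CollatzWielandt

section SpectralRadius

variable {n k : ℕ}

lemma norm_le_sup'_ratio_of_isEig {A : Fin n → (Fin k → Fin n) → ℝ} (hA : NonnegT A)
    (hne : (univ : Finset (Fin n)).Nonempty) {x : Fin n → ℝ} (hx : ∀ i, 0 < x i) {lam : ℂ}
    (h : IsEig A lam) : ‖lam‖ ≤ univ.sup' hne (fun i => tApplyR A x i / x i ^ k) := by
  obtain ⟨u, hu0, hu⟩ := h
  refine le_sup'_ratio_of_le hA hne hx (fun i => norm_nonneg (u i))
    (fun h0 => hu0 (funext fun i => norm_eq_zero.mp (congrFun h0 i))) fun i => ?_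
  simpa [hu i] using norm_tApplyC_le hA u i

lemma bddAbove_modSet {A : Fin n → (Fin k → Fin n) → ℝ} (hA : NonnegT A)
    (hne : (univ : Finset (Fin n)).Nonempty) : BddAbove (modSet A) :=
  ⟨_, fun _ ⟨_, h, hr⟩ =>
    hr ▸ norm_le_sup'_ratio_of_isEig hA hne (x := fun _ => 1) (fun _ => one_pos) h⟩

lemma specRad_le_sup'_ratio {A : Fin n → (Fin k → Fin n) → ℝ} (hA : NonnegT A)
    (hne : (univ : Finset (Fin n)).Nonempty) {x : Fin n → ℝ} (hx : ∀ i, 0 < x i) :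
    specRad A ≤ univ.sup' hne (fun i => tApplyR A x i / x i ^ k) := by
  obtain ⟨l, -⟩ := id hne
  refine Real.sSup_le (fun _ ⟨lam, h, hr⟩ => hr ▸ norm_le_sup'_ratio_of_isEig hA hne hx h) ?_
  exact (div_nonneg (tApplyR_nonneg hA (fun i => (hx i).le) l) (pow_nonneg (hx l).le k)).trans
    (le_sup' (fun i => tApplyR A x i / x i ^ k) (mem_univ l))

end SpectralRadius

/-- Collatz–Wielandt bounds — for a nonnegative tensor `B` and `x > 0`,
`min_i (B x^{m-1})_i / x_i^{m-1} ≤ ρ(B) ≤ max_i (B x^{m-1})_i / x_i^{m-1}`. -/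
theorem collatz_wielandt {n k : ℕ} (hn : 0 < n) (B : Fin n → (Fin k → Fin n) → ℝ)
    (hB : NonnegT B) (x : Fin n → ℝ) (hx : ∀ i, 0 < x i)
    (hYY : ∃ y : Fin n → ℝ, y ≠ 0 ∧ (∀ i, 0 ≤ y i) ∧
      IsEigPair B ((specRad B : ℝ) : ℂ) (fun i => (y i : ℂ))) :
    Finset.univ.inf' (Finset.univ_nonempty_iff.mpr (Fin.pos_iff_nonempty.mp hn))
        (fun i => tApplyR B x i / x i ^ k) ≤ specRad B ∧
    specRad B ≤ Finset.univ.sup' (Finset.univ_nonempty_iff.mpr (Fin.pos_iff_nonempty.mp hn))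
        (fun i => tApplyR B x i / x i ^ k) := by
  have hne : (univ : Finset (Fin n)).Nonempty :=
    univ_nonempty_iff.mpr (Fin.pos_iff_nonempty.mp hn)
  refine ⟨?_, specRad_le_sup'_ratio hB hne hx⟩
  rcases eq_or_ne k 0 with rfl | hk
  · obtain ⟨y, -, -, -, hy⟩ := hYY
    have hρ : ∀ i, tApplyR B x i = specRad B := fun i => by
      have hxy : tApplyR B x i = tApplyR B y i := by simp [tApplyR]
      simpa [tApplyC_ofReal, hxy] using hy i
    calc univ.inf' hne (fun i => tApplyR B x i / x i ^ 0) ≤ tApplyR B x ⟨0, hn⟩ / x ⟨0, hn⟩ ^ 0 :=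
          inf'_le _ (mem_univ _)
      _ = specRad B := by rw [pow_zero, div_one, hρ]
  · obtain ⟨lam, hμ, y, hy, heig⟩ := exists_eigenvector_ge_of_mem_collatzWielandtSet hB hk hne
      (inf'_ratio_mem_collatzWielandtSet hne B hx)
    have hlam : |lam| ∈ modSet B :=
      ⟨lam, ⟨_, isEigPair_ofReal (ne_zero_of_mem_stdSimplex hy) heig⟩, by simp⟩
    exact hμ.trans ((le_abs_self lam).trans (le_csSup (bddAbove_modSet hB hne) hlam))
end
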